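/- arXiv:2107.06121 — 4 statements merged into one kernel-verified Lean document; each statement's English description precedes it below -/
import Mathlib

section
/- Let G be a finite edge-weighted graph with weights in the natural numbers, let v be a node of G, let N be a nonempty set of nodes of G with v ∉ N, and let ω ∈ ℕ. Suppose that the edges of G incident to v with other endpoint in N are exactly the edges (v, u) for all u ∈ N, each of weight ω; let G₀ be the graph G with these edges removed. Suppose further that every two distinct nodes of N are adjacent in G₀ by an edge of weight at least ω, and let S be a maximum-weight spanning forest of G₀ such that the connected component of v in S contains no node of N. Then for every u ∈ N, the forest S ∪ {(v, u)} is a maximum-weight spanning forest of G. -/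
/-!
Spanning forests of finite edge-weighted graphs.  A weight function is given on
unordered pairs, `w : Sym2 α → ℕ`.
-/

variable {α : Type*} [Fintype α]

/-- The weight of a graph `S` w.r.t. the edge-weight function `w`:
the sum of the weights of its edges. -/
noncomputable def gweight (S : SimpleGraph α) (w : Sym2 α → ℕ) : ℕ :=
  ∑ p ∈ (Set.toFinite S.edgeSet).toFinset, w p

/-- `S` is a spanning forest of `G`: an acyclic subgraph with the same connected
components (in particular it contains all nodes of `G`). -/
def IsSpanningForest (G S : SimpleGraph α) : Prop :=
  S ≤ G ∧ S.IsAcyclic ∧ ∀ a b, S.Reachable a b ↔ G.Reachable a b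

/-- `S` is a maximum-weight spanning forest of `G` w.r.t. the weights `w`. -/
def IsMaxSpanningForest (G S : SimpleGraph α) (w : Sym2 α → ℕ) : Prop :=
  IsSpanningForest G S ∧ ∀ S', IsSpanningForest G S' → gweight S' w ≤ gweight S w

/-!
Let `F` be a spanning forest of `G`. As `v` and `N` lie in different components of `G₀`, `F`
contains an edge `va` with `a ∈ N`. While it contains a second one, `vb`, exchange `vb` for the
clique edge `ab`: the result is again a spanning forest of `G`, at least as heavy since
`w(ab) ≥ ω = w(vb)`. Once `va` is the only edge from `v` into `N`, deleting it leaves a spanning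
forest of `G₀`, so `w(F) ≤ w(S) + ω`. Conversely `S + vu` is a spanning forest of `G`: the edge
`vu` joins two components of `S`, and every other edge `vu'` is bypassed by `u ~ u'` in `G₀`.
-/

namespace SimpleGraph

section General

variable {V : Type*} {G H : SimpleGraph V}

theorem Reachable.of_forall_adj_reachable {x y : V} (h : G.Reachable x y)
    (hGH : ∀ ⦃p q⦄, G.Adj p q → H.Reachable p q) : H.Reachable x y := by
  obtain ⟨p⟩ := h
  induction p with
  | nil => rfl
  | cons hadj _ ih => exact (hGH hadj).trans ih

theorem reachable_sup_edge_iff {a b x y : V} :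
    (H ⊔ edge a b).Reachable x y ↔ H.Reachable x y ∨ (H.Reachable x a ∧ H.Reachable b y) ∨
      (H.Reachable x b ∧ H.Reachable a y) := by
  refine ⟨fun h => ?_, ?_⟩
  · rw [reachable_iff_reflTransGen] at h
    induction h with
    | refl => exact .inl .rfl
    | tail _ hyz ih =>
      rcases hyz with hyz | hyz
      · have hyz := hyz.reachable
        rcases ih with h | ⟨h₁, h₂⟩ | ⟨h₁, h₂⟩
        exacts [.inl (h.trans hyz), .inr (.inl ⟨h₁, h₂.trans hyz⟩),
          .inr (.inr ⟨h₁, h₂.trans hyz⟩)]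
      · rw [edge_adj] at hyz
        obtain ⟨⟨rfl, rfl⟩ | ⟨rfl, rfl⟩, -⟩ := hyz <;>
          rcases ih with h | ⟨h₁, h₂⟩ | ⟨h₁, h₂⟩ <;> simp_all
  · have hab : (H ⊔ edge a b).Reachable a b := by
      rcases eq_or_ne a b with rfl | hne
      · rfl
      · exact Adj.reachable (.inr ((edge_adj ..).2 ⟨.inl ⟨rfl, rfl⟩, hne⟩))
    have hle : H ≤ H ⊔ edge a b := le_sup_left
    rintro (h | ⟨h₁, h₂⟩ | ⟨h₁, h₂⟩)
    · exact h.mono hle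
    · exact (h₁.mono hle).trans (hab.trans (h₂.mono hle))
    · exact (h₁.mono hle).trans (hab.symm.trans (h₂.mono hle))

theorem deleteEdges_sup_edge {x y : V} (h : G.Adj x y) :
    G.deleteEdges {s(x, y)} ⊔ edge x y = G :=
  sdiff_sup_cancel ((edge_le_iff _).2 (.inr h))

theorem IsAcyclic.not_reachable_deleteEdges {v a b : V} (hG : G.IsAcyclic) (hva : G.Adj v a)
    (hvb : G.Adj v b) (hab : a ≠ b) : ¬(G.deleteEdges {s(v, b)}).Reachable a b := by
  have hbridge : ¬(G.deleteEdges {s(v, b)}).Reachable v b :=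
    isBridge_iff.1 (isAcyclic_iff_forall_isBridge.1 hG hvb)
  have hva' : (G.deleteEdges {s(v, b)}).Adj v a :=
    deleteEdges_adj.2 ⟨hva, fun h => hab (Sym2.congr_right.1 h)⟩
  exact fun h => hbridge (hva'.reachable.trans h)

theorem neighborSet_deleteEdges_sup_edge {v a b : V} (ha : a ≠ v) (hb : b ≠ v) :
    (G.deleteEdges {s(v, b)} ⊔ edge a b).neighborSet v = G.neighborSet v \ {b} := by
  ext x
  simp only [Set.mem_sdiff, Set.mem_singleton_iff, mem_neighborSet, sup_adj, deleteEdges_adj,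
    Sym2.congr_right, edge_adj]
  grind

def starEdges (v : V) (N : Set V) : Set (Sym2 V) := {p | ∃ u ∈ N, p = s(v, u)}

theorem le_deleteEdges_starEdges {F : SimpleGraph V} {v : V} {N : Set V} (hFG : F ≤ G)
    (hN : ∀ u ∈ N, ¬F.Adj v u) : F ≤ G.deleteEdges (starEdges v N) := by
  intro x y hxy
  refine deleteEdges_adj.2 ⟨hFG hxy, ?_⟩
  rintro ⟨u, hu, he⟩
  rcases Sym2.eq_iff.1 he with ⟨rfl, rfl⟩ | ⟨rfl, rfl⟩
  exacts [hN _ hu hxy, hN _ hu hxy.symm]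

end General

end SimpleGraph

open SimpleGraph

section SpanningForest

variable {V : Type*} {G H F : SimpleGraph V}

theorem IsSpanningForest.deleteEdges_of_not_reachable {x y : V} (hF : IsSpanningForest G F)
    (hxy : F.Adj x y) (hHG : H ≤ G) (hFH : F.deleteEdges {s(x, y)} ≤ H)
    (hH : ¬H.Reachable x y) : IsSpanningForest H (F.deleteEdges {s(x, y)}) := by
  refine ⟨hFH, hF.2.1.anti (deleteEdges_le _), fun a b => ⟨fun h => h.mono hFH, fun h => ?_⟩⟩
  have hF_ab := (hF.2.2 a b).2 (h.mono hHG)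
  rw [← deleteEdges_sup_edge hxy, reachable_sup_edge_iff] at hF_ab
  rcases hF_ab with h' | ⟨hax, hyb⟩ | ⟨hay, hxb⟩
  · exact h'
  · exact absurd (((hax.mono hFH).symm.trans h).trans (hyb.mono hFH).symm) hH
  · exact absurd (((hxb.mono hFH).trans h.symm).trans (hay.mono hFH)) hH

theorem IsSpanningForest.exchange {x y a b : V} (hF : IsSpanningForest G F) (hxy : F.Adj x y)
    (hab : G.Adj a b) (hsep : ¬(F.deleteEdges {s(x, y)}).Reachable a b) :
    IsSpanningForest G (F.deleteEdges {s(x, y)} ⊔ edge a b) := by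
  set F' := F.deleteEdges {s(x, y)}
  have hF'F : F' ≤ F := deleteEdges_le _
  have hle : F' ⊔ edge a b ≤ G := sup_le (hF'F.trans hF.1) ((edge_le_iff _).2 (.inr hab))
  -- Since `a` and `b` are separated in `F'`, the path from `a` to `b` in `F` runs through `xy`.
  have hxy' : (F' ⊔ edge a b).Reachable x y := by
    have hF_ab := (hF.2.2 a b).2 hab.reachable
    rw [← deleteEdges_sup_edge hxy, reachable_sup_edge_iff] at hF_ab
    have hab' : (F' ⊔ edge a b).Reachable a b :=
      reachable_sup_edge_iff.2 (.inr (.inl ⟨.rfl, .rfl⟩))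
    rcases hF_ab with h | ⟨hax, hyb⟩ | ⟨hay, hxb⟩
    · exact absurd h hsep
    · exact ((hax.mono le_sup_left).symm.trans hab').trans (hyb.mono le_sup_left).symm
    · exact ((hxb.mono le_sup_left).trans hab'.symm).trans (hay.mono le_sup_left)
  refine ⟨hle, (hF.2.1.anti hF'F).sup_edge_of_not_reachable hsep,
    fun p q => ⟨fun h => h.mono hle, fun h => ?_⟩⟩
  refine ((hF.2.2 p q).2 h).of_forall_adj_reachable fun p q hpq => ?_
  rw [← deleteEdges_sup_edge hxy] at hpq
  rcases hpq with hpq | hpq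
  · exact hpq.reachable.mono le_sup_left
  · obtain ⟨⟨rfl, rfl⟩ | ⟨rfl, rfl⟩, -⟩ := (edge_adj ..).1 hpq
    exacts [hxy', hxy'.symm]

end SpanningForest

section Weight

variable {V : Type*} [Fintype V] {F : SimpleGraph V}

theorem gweight_eq_finsum (F : SimpleGraph V) (w : Sym2 V → ℕ) :
    gweight F w = ∑ᶠ e ∈ F.edgeSet, w e :=
  (finsum_mem_eq_finite_toFinset_sum w _).symm

theorem gweight_sup_edge {a b : V} (hab : ¬F.Adj a b) (hne : a ≠ b) (w : Sym2 V → ℕ) :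
    gweight (F ⊔ edge a b) w = gweight F w + w s(a, b) := by
  rw [gweight_eq_finsum, gweight_eq_finsum, edgeSet_sup, edgeSet_edge_of_ne hne,
    Set.union_singleton, finsum_mem_insert _ (mt F.mem_edgeSet.1 hab) (Set.toFinite _), add_comm]

theorem gweight_deleteEdges_add {a b : V} (h : F.Adj a b) (w : Sym2 V → ℕ) :
    gweight (F.deleteEdges {s(a, b)}) w + w s(a, b) = gweight F w := by
  rw [← gweight_sup_edge (by simp) h.ne, deleteEdges_sup_edge h]

end Weight

section CrossingEdge

variable {V : Type*} {G G₀ S : SimpleGraph V} {w : Sym2 V → ℕ} {v u : V} {N : Set V} {ω : ℕ}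

theorem isSpanningForest_sup_edge (hG₀ : G₀ = G.deleteEdges (starEdges v N))
    (hconn : ∀ u ∈ N, ∀ u' ∈ N, G₀.Reachable u u') (hS : IsSpanningForest G₀ S) (hu : u ∈ N)
    (hvu : G.Adj v u) (hsep : ¬G₀.Reachable v u) : IsSpanningForest G (S ⊔ edge v u) := by
  subst hG₀
  have hle : S ⊔ edge v u ≤ G :=
    sup_le (hS.1.trans (deleteEdges_le _)) ((edge_le_iff _).2 (.inr hvu))
  have hSreach : ∀ x y, (G.deleteEdges (starEdges v N)).Reachable x y →
      (S ⊔ edge v u).Reachable x y :=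
    fun x y h => ((hS.2.2 x y).2 h).mono le_sup_left
  refine ⟨hle, hS.2.1.sup_edge_of_not_reachable fun h => hsep (h.mono hS.1),
    fun a b => ⟨fun h => h.mono hle, fun h => h.of_forall_adj_reachable fun p q hpq => ?_⟩⟩
  by_cases hstar : s(p, q) ∈ starEdges v N
  · obtain ⟨u', hu', he⟩ := hstar
    have hvu' : (S ⊔ edge v u).Reachable v u' :=
      (reachable_sup_edge_iff.2 (.inr (.inl ⟨.rfl, .rfl⟩))).trans
        (hSreach _ _ (hconn u hu u' hu'))
    rcases Sym2.eq_iff.1 he with ⟨rfl, rfl⟩ | ⟨rfl, rfl⟩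
    exacts [hvu', hvu'.symm]
  · exact hSreach _ _ (deleteEdges_adj.2 ⟨hpq, hstar⟩).reachable

theorem IsSpanningForest.deleteEdges_starEdge {F : SimpleGraph V} {a : V}
    (hG₀ : G₀ = G.deleteEdges (starEdges v N)) (hF : IsSpanningForest G F) (hva : F.Adj v a)
    (honly : ∀ b ∈ N, F.Adj v b → b = a) (hsep : ¬G₀.Reachable v a) :
    IsSpanningForest G₀ (F.deleteEdges {s(v, a)}) := by
  have hle : F.deleteEdges {s(v, a)} ≤ G₀ := hG₀ ▸ le_deleteEdges_starEdges
    ((deleteEdges_le _).trans hF.1) fun b hb hvb => by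
      obtain ⟨hvb, hne⟩ := deleteEdges_adj.1 hvb
      exact hne (honly b hb hvb ▸ rfl)
  exact hF.deleteEdges_of_not_reachable hva (hG₀ ▸ deleteEdges_le _) hle hsep

theorem gweight_le_of_isSpanningForest [Fintype V]
    (hG₀ : G₀ = G.deleteEdges (starEdges v N)) (hv : v ∉ N) (hweight : ∀ u ∈ N, w s(v, u) = ω)
    (hClique : ∀ u ∈ N, ∀ u' ∈ N, u ≠ u' → G₀.Adj u u' ∧ ω ≤ w s(u, u'))
    (hS : IsMaxSpanningForest G₀ S w) (hsep : ∀ u ∈ N, ¬G₀.Reachable v u) (hu : u ∈ N)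
    (hvu : G.Adj v u) {F : SimpleGraph V} (hF : IsSpanningForest G F) :
    gweight F w ≤ gweight S w + ω := by
  induction hn : (N ∩ F.neighborSet v).ncard using Nat.strong_induction_on generalizing F with
  | _ n ih =>
  obtain ⟨a, haN, hva⟩ : ∃ a ∈ N, F.Adj v a := by
    by_contra! hnone
    have hFG₀ : F ≤ G₀ := hG₀ ▸ le_deleteEdges_starEdges hF.1 hnone
    exact hsep u hu (((hF.2.2 v u).2 hvu.reachable).mono hFG₀)
  by_cases honly : ∀ b ∈ N, F.Adj v b → b = a
  · have hT := hF.deleteEdges_starEdge hG₀ hva honly (hsep a haN)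
    calc gweight F w = gweight (F.deleteEdges {s(v, a)}) w + ω := by
          rw [← hweight a haN, gweight_deleteEdges_add hva]
      _ ≤ gweight S w + ω := by gcongr; exact hS.2 _ hT
  · push Not at honly
    obtain ⟨b, hbN, hvb, hba⟩ := honly
    have hsep' := hF.2.1.not_reachable_deleteEdges hva hvb hba.symm
    obtain ⟨hab, hωab⟩ := hClique a haN b hbN hba.symm
    have hF' := hF.exchange hvb ((hG₀ ▸ deleteEdges_le _ : G₀ ≤ G) hab) hsep'
    have hcross : N ∩ (F.deleteEdges {s(v, b)} ⊔ edge a b).neighborSet v =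
        (N ∩ F.neighborSet v) \ {b} := by
      rw [neighborSet_deleteEdges_sup_edge (ne_of_mem_of_not_mem haN hv)
        (ne_of_mem_of_not_mem hbN hv), Set.inter_sdiff_assoc]
    calc gweight F w = gweight (F.deleteEdges {s(v, b)}) w + ω := by
          rw [← hweight b hbN, gweight_deleteEdges_add hvb]
      _ ≤ gweight (F.deleteEdges {s(v, b)} ⊔ edge a b) w := by
          rw [gweight_sup_edge (fun h => hsep' h.reachable) hba.symm]
          gcongr
      _ ≤ gweight S w + ω :=
          ih _ (hn ▸ hcross ▸ Set.ncard_sdiff_singleton_lt_of_mem ⟨hbN, hvb⟩) hF' rfl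

end CrossingEdge

theorem maxSpanningForest_add_crossing_edge_general (G : SimpleGraph α) (w : Sym2 α → ℕ)
    (v : α) (N : Set α) (hv : v ∉ N) (ω : ℕ)
    (hEdges : ∀ u ∈ N, G.Adj v u ∧ w s(v, u) = ω)
    (G₀ : SimpleGraph α)
    (hG₀ : G₀ = G.deleteEdges {p : Sym2 α | ∃ u ∈ N, p = s(v, u)})
    (hClique : ∀ u ∈ N, ∀ u' ∈ N, u ≠ u' → G₀.Adj u u' ∧ ω ≤ w s(u, u'))
    (S : SimpleGraph α) (hS : IsMaxSpanningForest G₀ S w)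
    (hComp : ∀ u ∈ N, ¬ S.Reachable v u) :
    ∀ u ∈ N, IsMaxSpanningForest G (S ⊔ SimpleGraph.fromEdgeSet {s(v, u)}) w := by
  intro u hu
  have hvu : v ≠ u := fun h => hv (h ▸ hu)
  have hsep : ∀ u ∈ N, ¬G₀.Reachable v u := fun u hu h => hComp u hu ((hS.1.2.2 v u).2 h)
  have hconn : ∀ u ∈ N, ∀ u' ∈ N, G₀.Reachable u u' := fun u hu u' hu' =>
    (eq_or_ne u u').elim (fun h => h ▸ .rfl) fun h => (hClique u hu u' hu' h).1.reachable
  change IsMaxSpanningForest G (S ⊔ edge v u) w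
  refine ⟨isSpanningForest_sup_edge hG₀ hconn hS.1 hu (hEdges u hu).1 (hsep u hu), fun F hF => ?_⟩
  rw [gweight_sup_edge (fun h => hComp u hu h.reachable) hvu, (hEdges u hu).2]
  exact gweight_le_of_isSpanningForest hG₀ hv (fun u hu => (hEdges u hu).2) hClique hS hsep hu
    (hEdges u hu).1 hF

/-- Let the edges of `G` from `v` into the nonempty set `N` be exactly the pairs
`(v, u)`, `u ∈ N`, each of weight `ω`; let `G₀` be `G` without these edges, in which
`N` is a clique whose edges have weight at least `ω`.  If `S` is a maximum-weight
spanning forest of `G₀` whose component of `v` contains no node of `N`, then for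
every `u ∈ N`, adding the edge `(v, u)` to `S` yields a maximum-weight spanning
forest of `G`. -/
theorem maxSpanningForest_add_crossing_edge (G : SimpleGraph α) (w : Sym2 α → ℕ)
    (v : α) (N : Set α) (hN : N.Nonempty) (hv : v ∉ N) (ω : ℕ)
    (hEdges : ∀ u ∈ N, G.Adj v u ∧ w s(v, u) = ω)
    (G₀ : SimpleGraph α)
    (hG₀ : G₀ = G.deleteEdges {p : Sym2 α | ∃ u ∈ N, p = s(v, u)})
    (hClique : ∀ u ∈ N, ∀ u' ∈ N, u ≠ u' → G₀.Adj u u' ∧ ω ≤ w s(u, u'))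
    (S : SimpleGraph α) (hS : IsMaxSpanningForest G₀ S w)
    (hComp : ∀ u ∈ N, ¬ S.Reachable v u) :
    ∀ u ∈ N, IsMaxSpanningForest G (S ⊔ SimpleGraph.fromEdgeSet {s(v, u)}) w :=
  maxSpanningForest_add_crossing_edge_general G w v N hv ω hEdges G₀ hG₀ hClique S hS hComp
end

section
/- (Gluing along a join-forest edge) Let J be a join forest of Q and let (t, t') be an edge of J. Let T and T' be the node sets of the two trees obtained by removing the edge (t, t') from J, with t ∈ T and t' ∈ T'. Suppose h, h' : Q → D are maps that satisfy T and T' respectively, and h(v) = h'(v) for every element v of Q occurring in both t and t'. Then the map g : Q → D defined by g(v) = h(v) if v occurs in some hyperedge belonging to T and g(v) = h'(v) otherwise satisfies T ∪ T'. -/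
/-!
Relational structures, hyperedges, join forests, and partial homomorphisms.
-/

/-- A purely relational language: a type of relation symbols with arities. -/
structure Lang where
  R : Type
  arity : R → ℕ

/-- A structure for the language `L` with domain `α`. -/
structure Str (L : Lang) (α : Type) where
  rel : ∀ r : L.R, (Fin (L.arity r) → α) → Prop

/-- A potential hyperedge: a relation symbol together with a tuple of elements. -/
def HEdge (L : Lang) (α : Type) : Type := Σ r : L.R, Fin (L.arity r) → α

/-- `(R, ā)` is a hyperedge of the structure `SQ` if `R` holds of `ā` in `SQ`. -/
def IsHyperedge {L : Lang} {α : Type} (SQ : Str L α) (t : HEdge L α) : Prop :=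
  SQ.rel t.1 t.2

/-- An element `v` occurs in the hyperedge `t` if it is an entry of its tuple. -/
def OccursIn {L : Lang} {α : Type} (v : α) (t : HEdge L α) : Prop :=
  ∃ k, t.2 k = v

/-- A map `h : α → β` satisfies a set `T` of hyperedges of `Q` if for every
`(R, ā) ∈ T`, `R` holds of `h ∘ ā` in the structure `SD`. -/
def Satisfies {L : Lang} {α β : Type} (SD : Str L β) (h : α → β)
    (T : Set (HEdge L α)) : Prop :=
  ∀ t ∈ T, SD.rel t.1 (h ∘ t.2)

/-- A join forest of `SQ`: a forest on the hyperedges of `SQ` such that any two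
hyperedges sharing an element `v` are connected, and every node on the (unique)
path between them is a hyperedge in which `v` occurs. -/
def IsJoinForest {L : Lang} {α : Type} (SQ : Str L α)
    (J : SimpleGraph (HEdge L α)) : Prop :=
  J.IsAcyclic ∧
  (∀ t t', J.Adj t t' → IsHyperedge SQ t ∧ IsHyperedge SQ t') ∧
  ∀ t t', IsHyperedge SQ t → IsHyperedge SQ t' →
    ∀ v, OccursIn v t → OccursIn v t' →
      J.Reachable t t' ∧ ∀ p : J.Walk t t', p.IsPath → ∀ s ∈ p.support, OccursIn v s

/-!
Removing the edge `(t, t')` of a forest separates `T` from `T'`, so any path from a hyperedge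
of `T` to a hyperedge of `T'` crosses that edge. By the join-forest property, an element
occurring in hyperedges on both sides therefore occurs in `t` and in `t'`, where `h` and `h'`
agree. Hence `g` agrees with `h` on the elements of `T` and with `h'` on those of `T'`.
-/

namespace SimpleGraph

variable {V : Type*} {G : SimpleGraph V} {u v a b : V}

theorem IsBridge.mem_edges_of_reachable (hbr : G.IsBridge s(u, v))
    (ha : (G.deleteEdges {s(u, v)}).Reachable u a)
    (hb : (G.deleteEdges {s(u, v)}).Reachable v b) (p : G.Walk a b) :
    s(u, v) ∈ p.edges := by
  by_contra he
  exact hbr (ha.trans ((p.toDeleteEdge _ he).reachable.trans hb.symm))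

end SimpleGraph

section JoinForest

variable {L : Lang} {α β : Type} {SQ : Str L α} {J : SimpleGraph (HEdge L α)}

theorem Satisfies.congr {SD : Str L β} {g h : α → β} {T : Set (HEdge L α)}
    (hh : Satisfies SD h T) (hgh : ∀ s ∈ T, ∀ v, OccursIn v s → g v = h v) :
    Satisfies SD g T := by
  intro s hs
  have hcomp : g ∘ s.2 = h ∘ s.2 := funext fun k => hgh s hs _ ⟨k, rfl⟩
  exact hcomp ▸ hh s hs

theorem IsJoinForest.isHyperedge_of_reachable (hJ : IsJoinForest SQ J) {u s : HEdge L α}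
    (hu : IsHyperedge SQ u) (hus : J.Reachable u s) : IsHyperedge SQ s := by
  obtain ⟨w⟩ := hus.symm
  cases w with
  | nil => exact hu
  | cons hadj _ => exact (hJ.2.1 _ _ hadj).1

theorem IsJoinForest.occursIn_of_reachable_deleteEdges (hJ : IsJoinForest SQ J)
    {t t' a b : HEdge L α} (hAdj : J.Adj t t')
    (ha : (J.deleteEdges {s(t, t')}).Reachable t a)
    (hb : (J.deleteEdges {s(t, t')}).Reachable t' b)
    {v : α} (hva : OccursIn v a) (hvb : OccursIn v b) :
    OccursIn v t ∧ OccursIn v t' := by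
  classical
  have hle := J.deleteEdges_le {s(t, t')}
  have haQ := hJ.isHyperedge_of_reachable (hJ.2.1 t t' hAdj).1 (ha.mono hle)
  have hbQ := hJ.isHyperedge_of_reachable (hJ.2.1 t t' hAdj).2 (hb.mono hle)
  obtain ⟨⟨w⟩, hocc⟩ := hJ.2.2 a b haQ hbQ v hva hvb
  obtain ⟨p, hp⟩ := w.toPath
  have hbridge := SimpleGraph.isAcyclic_iff_forall_adj_isBridge.mp hJ.1 hAdj
  have he := hbridge.mem_edges_of_reachable ha hb p
  exact ⟨hocc p hp t (p.fst_mem_support_of_mem_edges he),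
    hocc p hp t' (p.snd_mem_support_of_mem_edges he)⟩

end JoinForest

theorem glue_along_joinForest_edge_general {L : Lang} {α β : Type}
    (SQ : Str L α) (SD : Str L β)
    (J : SimpleGraph (HEdge L α)) (hJ : IsJoinForest SQ J)
    (t t' : HEdge L α) (hAdj : J.Adj t t')
    (T T' : Set (HEdge L α))
    (hT : T = {s | (J.deleteEdges {s(t, t')}).Reachable t s})
    (hT' : T' = {s | (J.deleteEdges {s(t, t')}).Reachable t' s})
    (h h' : α → β)
    (hh : Satisfies SD h T) (hh' : Satisfies SD h' T')
    (hagree : ∀ v, OccursIn v t → OccursIn v t' → h v = h' v)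
    (g : α → β)
    (hg : ∀ v, (∃ s ∈ T, OccursIn v s) → g v = h v)
    (hg' : ∀ v, ¬ (∃ s ∈ T, OccursIn v s) → g v = h' v) :
    Satisfies SD g (T ∪ T') := by
  rintro s (hs | hs)
  · exact hh.congr (fun u hu v hv => hg v ⟨u, hu, hv⟩) s hs
  · refine hh'.congr (fun u hu v hv => ?_) s hs
    by_cases hvT : ∃ s₀ ∈ T, OccursIn v s₀
    · obtain ⟨s₀, hs₀, hv₀⟩ := hvT
      rw [hg v ⟨s₀, hs₀, hv₀⟩]
      rw [hT] at hs₀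
      rw [hT'] at hu
      obtain ⟨hvt, hvt'⟩ := hJ.occursIn_of_reachable_deleteEdges hAdj hs₀ hu hv₀ hv
      exact hagree v hvt hvt'
    · exact hg' v hvT

/-- **Gluing along a join-forest edge**: if `(t, t')` is an edge of a join forest
`J` of `Q`, with `T`, `T'` the node sets of the two trees obtained by removing the
edge (`t ∈ T`, `t' ∈ T'`), `h` satisfies `T`, `h'` satisfies `T'`, and `h`, `h'`
agree on all elements occurring in both `t` and `t'`, then the map `g` that equals
`h` on elements occurring in some hyperedge of `T` and equals `h'` elsewhere
satisfies `T ∪ T'`. -/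
theorem glue_along_joinForest_edge {L : Lang} {α β : Type} [Fintype α]
    (SQ : Str L α) (SD : Str L β)
    (J : SimpleGraph (HEdge L α)) (hJ : IsJoinForest SQ J)
    (t t' : HEdge L α) (hAdj : J.Adj t t')
    (T T' : Set (HEdge L α))
    (hT : T = {s | (J.deleteEdges {s(t, t')}).Reachable t s})
    (hT' : T' = {s | (J.deleteEdges {s(t, t')}).Reachable t' s})
    (h h' : α → β)
    (hh : Satisfies SD h T) (hh' : Satisfies SD h' T')
    (hagree : ∀ v, OccursIn v t → OccursIn v t' → h v = h' v)
    (g : α → β)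
    (hg : ∀ v, (∃ s ∈ T, OccursIn v s) → g v = h v)
    (hg' : ∀ v, ¬ (∃ s ∈ T, OccursIn v s) → g v = h' v) :
    Satisfies SD g (T ∪ T') :=
  glue_along_joinForest_edge_general SQ SD J hJ t t' hAdj T T' hT hT' h h' hh hh' hagree g hg hg'
end

section
/- (Componentwise existence of homomorphisms) Let J be a join forest of Q and suppose the domain of D is nonempty. Then there is a homomorphism from Q to D if and only if for every connected component C of J there is a map h_C : Q → D satisfying the set of hyperedges belonging to C. -/
/-!
Hyperedges sharing an element lie in the same component of a join forest. Hence the maps given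
for the components can be glued: send each element to its value under the map of the component
of any hyperedge containing it. On every hyperedge the glued map agrees with the map of that
hyperedge's component, so it satisfies all hyperedges.
-/

section Gluing

variable {L : Lang} {α β : Type}

theorem Satisfies.mono {SD : Str L β} {h : α → β} {T T' : Set (HEdge L α)}
    (hT : Satisfies SD h T) (hT' : T' ⊆ T) : Satisfies SD h T' :=
  fun t ht => hT t (hT' ht)

def RespectsSharedElements {ι : Type} (SQ : Str L α) (c : HEdge L α → ι) : Prop :=
  ∀ t t' v, IsHyperedge SQ t → IsHyperedge SQ t' → OccursIn v t → OccursIn v t' → c t = c t'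

theorem IsJoinForest.respectsSharedElements_connectedComponentMk {SQ : Str L α}
    {J : SimpleGraph (HEdge L α)} (hJ : IsJoinForest SQ J) :
    RespectsSharedElements SQ J.connectedComponentMk :=
  fun t t' v ht ht' hvt hvt' =>
    SimpleGraph.ConnectedComponent.sound (hJ.2.2 t t' ht ht' v hvt hvt').1

variable {ι : Type} [Nonempty β] (SQ : Str L α) (c : HEdge L α → ι) (g : ι → α → β)

open Classical in
noncomputable def glue (v : α) : β :=
  if hv : ∃ t, IsHyperedge SQ t ∧ OccursIn v t then g (c hv.choose) v
  else Classical.arbitrary β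

variable {SQ c}

theorem glue_comp_eq (hc : RespectsSharedElements SQ c) {t : HEdge L α}
    (ht : IsHyperedge SQ t) : glue SQ c g ∘ t.2 = g (c t) ∘ t.2 := by
  funext k
  have hex : ∃ s, IsHyperedge SQ s ∧ OccursIn (t.2 k) s := ⟨t, ht, k, rfl⟩
  have hlabel : c hex.choose = c t :=
    hc _ _ _ hex.choose_spec.1 ht hex.choose_spec.2 ⟨k, rfl⟩
  simp only [Function.comp_apply, glue, dif_pos hex, hlabel]

theorem satisfies_glue {SD : Str L β} (hc : RespectsSharedElements SQ c)
    (hg : ∀ i, Satisfies SD (g i) {t | IsHyperedge SQ t ∧ c t = i}) :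
    Satisfies SD (glue SQ c g) {t | IsHyperedge SQ t} := by
  intro t ht
  rw [glue_comp_eq g hc ht]
  exact hg (c t) t ⟨ht, rfl⟩

end Gluing

theorem homomorphism_iff_componentwise_general {L : Lang} {α β : Type}
    [Nonempty β] (SQ : Str L α) (SD : Str L β)
    (J : SimpleGraph (HEdge L α)) (hJ : IsJoinForest SQ J) :
    (∃ h : α → β, Satisfies SD h {t | IsHyperedge SQ t}) ↔
      ∀ C : J.ConnectedComponent, ∃ h : α → β,
        Satisfies SD h {t | IsHyperedge SQ t ∧ J.connectedComponentMk t = C} := by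
  constructor
  · rintro ⟨h, hh⟩ C
    exact ⟨h, hh.mono fun t ht => ht.1⟩
  · intro hcomp
    choose g hg using hcomp
    exact ⟨glue SQ J.connectedComponentMk g,
      satisfies_glue g hJ.respectsSharedElements_connectedComponentMk hg⟩

/-- **Componentwise existence of homomorphisms**: given a join forest `J` of `Q`
and a nonempty structure `D`, there is a homomorphism from `Q` to `D` iff for every
connected component `C` of `J` there is a map satisfying the hyperedges of `C`. -/
theorem homomorphism_iff_componentwise {L : Lang} {α β : Type} [Fintype α]
    [Nonempty β] (SQ : Str L α) (SD : Str L β)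
    (J : SimpleGraph (HEdge L α)) (hJ : IsJoinForest SQ J) :
    (∃ h : α → β, Satisfies SD h {t | IsHyperedge SQ t}) ↔
      ∀ C : J.ConnectedComponent, ∃ h : α → β,
        Satisfies SD h {t | IsHyperedge SQ t ∧ J.connectedComponentMk t = C} :=
  homomorphism_iff_componentwise_general SQ SD J hJ
end

section
/- (Correctness of the bottom-up recursion, Yannakakis step) Let J be a join forest of Q, let C be a connected component of J, let r be a node of C (the root), and let t be a node of C. For a node s of C, say s is in the subtree of t (with respect to root r) if t lies on the unique path from r to s in J, and let subtree(t) denote the set of all such nodes s; let t₁, …, t_m be the neighbours of t in J that belong to subtree(t) (the children of t). Then for every map h₀ : Q → D the following are equivalent: (i) there is a map h : Q → D satisfying subtree(t) with h(v) = h₀(v) for every element v occurring in t; (ii) h₀ satisfies {t}, and for every i ∈ {1, …, m} there is a map h_i : Q → D satisfying subtree(t_i) with h_i(v) = h₀(v) for every element v occurring in both t and t_i. -/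
/-- The subtree of `t` with respect to the root `r`: all nodes `s` such that `t`
lies on the (unique) path from `r` to `s` in the forest `J`. -/
def Subtree {L : Lang} {α : Type} (J : SimpleGraph (HEdge L α))
    (r t : HEdge L α) : Set (HEdge L α) :=
  {s | ∃ p : J.Walk r s, p.IsPath ∧ t ∈ p.support}


/-!
Every node of the subtree of `t` other than `t` lies in the subtree of exactly one child of `t`.
By the join-forest property, an element of `t` occurring in the subtree of a child `s` occurs in
`s` (it lies on the path from `t`), and an element occurring in the subtrees of two different
children occurs in `t` (the path between them runs through `t`). Hence the solutions for the
children agree with each other and with `h₀` wherever their domains overlap, and gluing them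
along `h₀` gives a solution on the whole subtree of `t`.
-/

open SimpleGraph Walk Set

theorem SimpleGraph.Walk.IsPath.reverse_append {V : Type*} {G : SimpleGraph V} {u v w : V}
    {p : G.Walk u v} {q : G.Walk u w} (hp : p.IsPath) (hq : q.IsPath)
    (hpq : ∀ a ∈ p.support, a ∈ q.support → a = u) : (p.reverse.append q).IsPath := by
  have hq' := hq.support_nodup
  rw [← cons_tail_support q, List.nodup_cons] at hq'
  rw [isPath_def, support_append, support_reverse]
  refine (List.nodup_reverse.2 hp.support_nodup).append hq'.2 fun a ha ha' => ?_
  exact hq'.1 (hpq a (List.mem_reverse.1 ha) (List.mem_of_mem_tail ha') ▸ ha')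

theorem SimpleGraph.IsAcyclic.eq_of_isPath {V : Type*} {G : SimpleGraph V} (hG : G.IsAcyclic)
    {u v : V} {p q : G.Walk u v} (hp : p.IsPath) (hq : q.IsPath) : p = q :=
  Subtype.mk.inj <| (hG.subsingleton_path u v).elim ⟨p, hp⟩ ⟨q, hq⟩

theorem exists_eqOn_of_compatible {ι α β : Type*} {A₀ : Set α} {A : ι → Set α}
    (h₀ : α → β) (H : ι → α → β) (hH₀ : ∀ i, EqOn (H i) h₀ (A₀ ∩ A i))
    (hH : ∀ i j, EqOn (H i) (H j) (A i ∩ A j)) :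
    ∃ h : α → β, EqOn h h₀ A₀ ∧ ∀ i, EqOn h (H i) (A i) := by
  classical
  refine ⟨fun v => if hv : ∃ i, v ∈ A i then H hv.choose v else h₀ v, fun v hv => ?_,
    fun i v hv => ?_⟩
  · dsimp only
    split_ifs with hex
    · exact hH₀ _ ⟨hv, hex.choose_spec⟩
    · rfl
  · have hex : ∃ i, v ∈ A i := ⟨i, hv⟩
    simp only [dif_pos hex]
    exact hH _ _ ⟨hex.choose_spec, hv⟩

section Subtree

variable {L : Lang} {α : Type} {J : SimpleGraph (HEdge L α)} {r t s s' x x' y : HEdge L α}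

def IsChild (J : SimpleGraph (HEdge L α)) (r t s : HEdge L α) : Prop :=
  J.Adj t s ∧ s ∈ Subtree J r t

lemma mem_subtree_self (h : J.Reachable r t) : t ∈ Subtree J r t :=
  let ⟨p, hp⟩ := h.exists_isPath
  ⟨p, hp, end_mem_support p⟩

lemma mem_support_of_mem_subtree (hJ : J.IsAcyclic) (hx : x ∈ Subtree J r t)
    {p : J.Walk r x} (hp : p.IsPath) : t ∈ p.support := by
  obtain ⟨q, hq, htq⟩ := hx
  rwa [hJ.eq_of_isPath hp hq]

lemma subtree_subset_subtree (hJ : J.IsAcyclic) (hs : s ∈ Subtree J r t) :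
    Subtree J r s ⊆ Subtree J r t := by
  classical
  rintro x ⟨p, hp, hsp⟩
  exact ⟨p, hp, p.support_takeUntil_subset_support hsp
    (mem_support_of_mem_subtree hJ hs (hp.takeUntil hsp))⟩

lemma mem_subtree_of_mem_support_dropUntil [DecidableEq (HEdge L α)] {p : J.Walk r x}
    (hp : p.IsPath) (ht : t ∈ p.support) (hy : y ∈ (p.dropUntil t ht).support) :
    y ∈ Subtree J r t := by
  have hpath : ((p.takeUntil t ht).append ((p.dropUntil t ht).takeUntil y hy)).IsPath := by
    have := hp
    rw [← take_spec p ht, ← take_spec (p.dropUntil t ht) hy, append_assoc] at this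
    exact this.of_append_left
  exact ⟨_, hpath, (mem_support_append_iff _ _).2 (Or.inl (end_mem_support _))⟩

lemma exists_isChild_of_mem_subtree (hx : x ∈ Subtree J r t) (hxt : x ≠ t) :
    ∃ s, IsChild J r t s ∧ x ∈ Subtree J r s := by
  classical
  obtain ⟨p, hp, htp⟩ := hx
  have hnil : ¬ (p.dropUntil t htp).Nil := not_nil_of_ne hxt.symm
  have hsnd := List.mem_of_mem_tail ((p.dropUntil t htp).snd_mem_tail_support hnil)
  exact ⟨_, ⟨adj_snd hnil, mem_subtree_of_mem_support_dropUntil hp htp hsnd⟩,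
    p, hp, p.support_dropUntil_subset_support htp hsnd⟩

lemma IsChild.notMem_subtree (hJ : J.IsAcyclic) (hs : IsChild J r t s) :
    t ∉ Subtree J r s := by
  rintro ⟨q, hq, hsq⟩
  obtain ⟨p, hp, htp⟩ := hs.2
  exact hJ.ne_mem_support_of_support_of_adj_of_isPath hp hq hs.1.symm htp hsq

lemma IsChild.exists_isPath_cons (hJ : J.IsAcyclic) (hs : IsChild J r t s)
    (hx : x ∈ Subtree J r s) :
    ∃ q : J.Walk s x, (cons hs.1 q).IsPath ∧ ∀ y ∈ q.support, y ∈ Subtree J r s := by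
  classical
  obtain ⟨p, hp, hsp⟩ := hx
  have hsub : ∀ y ∈ (p.dropUntil s hsp).support, y ∈ Subtree J r s :=
    fun y => mem_subtree_of_mem_support_dropUntil hp hsp
  exact ⟨_, (hp.dropUntil hsp).cons fun ht => hs.notMem_subtree hJ (hsub t ht), hsub⟩

lemma IsChild.eq_of_mem_subtree (hJ : J.IsAcyclic) (hs : IsChild J r t s)
    (hs' : IsChild J r t s') (hx : x ∈ Subtree J r s) (hx' : x ∈ Subtree J r s') : s = s' := by
  obtain ⟨q, hq, -⟩ := hs.exists_isPath_cons hJ hx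
  obtain ⟨q', hq', -⟩ := hs'.exists_isPath_cons hJ hx'
  simpa using congrArg Walk.snd (hJ.eq_of_isPath hq hq')

variable {SQ : Str L α} {v : α}

lemma IsJoinForest.isHyperedge_of_mem_subtree (hJ : IsJoinForest SQ J) (hs : IsChild J r t s)
    (hx : x ∈ Subtree J r s) : IsHyperedge SQ x :=
  let ⟨q, _⟩ := hs.exists_isPath_cons hJ.1 hx
  (hJ.2.1 _ _ ((cons hs.1 q).adj_penultimate not_nil_cons)).2

lemma IsJoinForest.occursIn_of_isChild (hJ : IsJoinForest SQ J) (hs : IsChild J r t s)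
    (hx : x ∈ Subtree J r s) (hvt : OccursIn v t) (hvx : OccursIn v x) : OccursIn v s := by
  obtain ⟨q, hq, -⟩ := hs.exists_isPath_cons hJ.1 hx
  exact (hJ.2.2 t x (hJ.2.1 t s hs.1).1 (hJ.isHyperedge_of_mem_subtree hs hx) v hvt hvx).2
    _ hq s (by simp)

lemma IsJoinForest.occursIn_of_isChild_of_isChild (hJ : IsJoinForest SQ J)
    (hs : IsChild J r t s) (hs' : IsChild J r t s') (hne : s ≠ s')
    (hx : x ∈ Subtree J r s) (hx' : x' ∈ Subtree J r s')
    (hvx : OccursIn v x) (hvx' : OccursIn v x') : OccursIn v t := by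
  obtain ⟨q, hq, hqs⟩ := hs.exists_isPath_cons hJ.1 hx
  obtain ⟨q', hq', hqs'⟩ := hs'.exists_isPath_cons hJ.1 hx'
  -- `x ⋯ s - t - s' ⋯ x'` is a path because the subtrees of distinct children are disjoint.
  have hpath := hq.reverse_append hq' fun a ha ha' => by
    rw [support_cons, List.mem_cons] at ha ha'
    rcases ha with rfl | ha
    · rfl
    rcases ha' with rfl | ha'
    · rfl
    exact absurd (hs.eq_of_mem_subtree hJ.1 hs' (hqs a ha) (hqs' a ha')) hne
  exact (hJ.2.2 x x' (hJ.isHyperedge_of_mem_subtree hs hx)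
    (hJ.isHyperedge_of_mem_subtree hs' hx') v hvx hvx').2 _ hpath t (by simp)

lemma comp_eq_of_forall_occursIn {β : Type} {h h' : α → β}
    (hx : ∀ v, OccursIn v x → h v = h' v) : h ∘ x.2 = h' ∘ x.2 :=
  funext fun k => hx _ ⟨k, rfl⟩

theorem IsJoinForest.exists_satisfies_subtree {β : Type} {SD : Str L β} {h₀ : α → β}
    (hJ : IsJoinForest SQ J) (ht : Satisfies SD h₀ {t})
    (hchildren : ∀ s, IsChild J r t s → ∃ h : α → β, Satisfies SD h (Subtree J r s) ∧
      ∀ v, OccursIn v t → OccursIn v s → h v = h₀ v) :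
    ∃ h : α → β, Satisfies SD h (Subtree J r t) ∧ ∀ v, OccursIn v t → h v = h₀ v := by
  choose H hHsat hHagree using fun s : {s // IsChild J r t s} => hchildren s s.2
  let A (s : {s // IsChild J r t s}) : Set α := {v | ∃ x ∈ Subtree J r s, OccursIn v x}
  have hH₀ s : EqOn (H s) h₀ ({v | OccursIn v t} ∩ A s) := fun v ⟨hvt, x, hx, hvx⟩ =>
    hHagree s v hvt (hJ.occursIn_of_isChild s.2 hx hvt hvx)
  have hH s s' : EqOn (H s) (H s') (A s ∩ A s') := by
    rintro v ⟨⟨x, hx, hvx⟩, ⟨x', hx', hvx'⟩⟩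
    obtain rfl | hne := eq_or_ne s s'
    · rfl
    have hvt := hJ.occursIn_of_isChild_of_isChild s.2 s'.2 (Subtype.coe_ne_coe.2 hne)
      hx hx' hvx hvx'
    exact (hH₀ s ⟨hvt, x, hx, hvx⟩).trans (hH₀ s' ⟨hvt, x', hx', hvx'⟩).symm
  obtain ⟨h, hh₀, hhH⟩ := exists_eqOn_of_compatible h₀ H hH₀ hH
  refine ⟨h, fun x hx => ?_, hh₀⟩
  obtain rfl | hxt := eq_or_ne x t
  · rw [comp_eq_of_forall_occursIn hh₀]
    exact ht x rfl
  · obtain ⟨s, hs, hxs⟩ := exists_isChild_of_mem_subtree hx hxt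
    rw [comp_eq_of_forall_occursIn fun v hv => hhH ⟨s, hs⟩ ⟨x, hxs, hv⟩]
    exact hHsat _ x hxs

end Subtree

theorem yannakakis_step_general {L : Lang} {α β : Type}
    (SQ : Str L α) (SD : Str L β)
    (J : SimpleGraph (HEdge L α)) (hJ : IsJoinForest SQ J)
    (r t : HEdge L α) (hrt : J.Reachable r t) (h₀ : α → β) :
    (∃ h : α → β, Satisfies SD h (Subtree J r t) ∧
        ∀ v, OccursIn v t → h v = h₀ v) ↔
      (Satisfies SD h₀ {t} ∧
        ∀ s, J.Adj t s → s ∈ Subtree J r t →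
          ∃ h : α → β, Satisfies SD h (Subtree J r s) ∧
            ∀ v, OccursIn v t → OccursIn v s → h v = h₀ v) := by
  constructor
  · rintro ⟨h, hsat, hagree⟩
    refine ⟨?_, fun s _ hs => ⟨h, fun x hx => hsat x (subtree_subset_subtree hJ.1 hs hx),
      fun v hvt _ => hagree v hvt⟩⟩
    rintro x rfl
    rw [← comp_eq_of_forall_occursIn hagree]
    exact hsat x (mem_subtree_self hrt)
  · rintro ⟨ht, hchildren⟩
    exact hJ.exists_satisfies_subtree ht fun s hs => hchildren s hs.1 hs.2

/-- **Correctness of the bottom-up recursion (Yannakakis step)**: for a node `t` of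
the component of the root `r` in a join forest `J` of `Q` and any map `h₀`, there is
a map satisfying the subtree of `t` and agreeing with `h₀` on the elements of `t`
iff `h₀` satisfies `{t}` and for every child `s` of `t` there is a map satisfying
the subtree of `s` and agreeing with `h₀` on the elements occurring in both `t`
and `s`. -/
theorem yannakakis_step {L : Lang} {α β : Type} [Fintype α]
    (SQ : Str L α) (SD : Str L β)
    (J : SimpleGraph (HEdge L α)) (hJ : IsJoinForest SQ J)
    (r t : HEdge L α) (hrt : J.Reachable r t) (h₀ : α → β) :
    (∃ h : α → β, Satisfies SD h (Subtree J r t) ∧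
        ∀ v, OccursIn v t → h v = h₀ v) ↔
      (Satisfies SD h₀ {t} ∧
        ∀ s, J.Adj t s → s ∈ Subtree J r t →
          ∃ h : α → β, Satisfies SD h (Subtree J r s) ∧
            ∀ v, OccursIn v t → OccursIn v s → h v = h₀ v) :=
  yannakakis_step_general SQ SD J hJ r t hrt h₀
end
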